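/- arXiv:1801.02759 — 2 statements merged into one kernel-verified Lean document; each statement's English description precedes it below -/
import Mathlib

section
/- Let Θ be proper, lower semi-continuous and p-convex (p ≥ 2, constant c₀ > 0) on a reflexive Banach space X. Then the conjugate Θ* has full domain X*, is Fréchet differentiable, and its gradient satisfies ‖∇Θ*(ξ₁) − ∇Θ*(ξ₂)‖ ≤ (‖ξ₁ − ξ₂‖/(2c₀))^{1/(p−1)} for all ξ₁, ξ₂ ∈ X*. -/
open NormedSpace

/-- Fenchel conjugate of an extended-real-valued function on a normed space. -/
noncomputable def fenchelConj {X : Type*} [NormedAddCommGroup X] [NormedSpace ℝ X]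
    (Θ : X → EReal) (ξ : StrongDual ℝ X) : EReal :=
  ⨆ z : X, (((ξ z : ℝ) : EReal) - Θ z)

/-!
Fix `ξ ∈ X*`. Lower semicontinuity bounds `Θ` below on a ball around a point of its domain, and
`p`-convexity turns this into a superlinear lower bound far away, so `Θ - ξ` is bounded below.
The `p`-convexity inequality at midpoints makes every minimizing sequence of `Θ - ξ` Cauchy; by
completeness and lower semicontinuity its limit `G ξ` is a minimizer, and letting `γ → 0` in the
`p`-convexity inequality at `G ξ` gives the growth `Θ - ξ ≥ min + c₀ ‖· - G ξ‖ ^ p`.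
Hence `Θ* ξ = ξ (G ξ) - Θ (G ξ)` is finite. Adding the growth inequalities for `ξ₁` and `ξ₂` gives
`2 c₀ ‖G ξ₁ - G ξ₂‖ ^ p ≤ ‖ξ₁ - ξ₂‖ ‖G ξ₁ - G ξ₂‖`, the Hölder bound, and the sandwich
`0 ≤ Θ* η - Θ* ξ - (η - ξ) (G ξ) ≤ (η - ξ) (G η - G ξ)` with `G` continuous gives `∇Θ* ξ = G ξ`.
-/

open Filter Topology

lemma exists_mul_sub_mul_rpow_le (C : ℝ) {a p : ℝ} (ha : 0 < a) (hp : 2 ≤ p) :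
    ∃ K, ∀ R, 0 ≤ R → C * R - a * R ^ p ≤ K := by
  refine ⟨|C| + C ^ 2 / (4 * a), fun R hR => ?_⟩
  have hK : 0 ≤ C ^ 2 / (4 * a) := by positivity
  rcases lt_or_ge R 1 with hR1 | hR1
  · have hCR : C * R ≤ |C| :=
      (mul_le_mul_of_nonneg_right (le_abs_self C) hR).trans
        (mul_le_of_le_one_right (abs_nonneg C) hR1.le)
    have : 0 ≤ a * R ^ p := by positivity
    linarith
  · have hR2 : R ^ (2 : ℕ) ≤ R ^ p := by
      rw [← Real.rpow_natCast]
      exact Real.rpow_le_rpow_of_exponent_le hR1 (by norm_num [hp])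
    have hq : C * R - a * R ^ (2 : ℕ) ≤ C ^ 2 / (4 * a) := by
      rw [le_div_iff₀ (by positivity)]
      nlinarith [sq_nonneg (2 * a * R - C)]
    nlinarith [abs_nonneg C]

lemma le_rpow_one_div_sub_one_of_mul_rpow_le {a c d p : ℝ} (ha : 0 ≤ a) (hc : 0 < c)
    (hp : 1 < p) (hd : 0 ≤ d) (h : c * d ^ p ≤ a * d) : d ≤ (a / c) ^ (1 / (p - 1)) := by
  rcases hd.eq_or_lt with rfl | hd
  · positivity
  have hdp : d ^ (p - 1) ≤ a / c := by
    rw [Real.rpow_sub hd, Real.rpow_one, div_le_div_iff₀ hd hc]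
    linarith
  calc d = (d ^ (p - 1)) ^ (1 / (p - 1)) := by
        rw [← Real.rpow_mul hd.le, mul_one_div_cancel (by linarith), Real.rpow_one]
    _ ≤ (a / c) ^ (1 / (p - 1)) := by gcongr

lemma cauchySeq_of_norm_sub_rpow_le {E : Type*} [SeminormedAddCommGroup E] {u : ℕ → E}
    {p : ℝ} (hp : 0 < p) {b : ℕ → ℝ} (hb : Tendsto b atTop (𝓝 0))
    (h : ∀ n k N, N ≤ n → N ≤ k → ‖u n - u k‖ ^ p ≤ b N) : CauchySeq u := by
  refine cauchySeq_of_le_tendsto_0 (fun N => b N ^ (1 / p)) (fun n k N hn hk => ?_) ?_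
  · calc dist (u n) (u k) = (‖u n - u k‖ ^ p) ^ (1 / p) := by
          rw [dist_eq_norm, ← Real.rpow_mul (norm_nonneg _), mul_one_div_cancel hp.ne',
            Real.rpow_one]
      _ ≤ b N ^ (1 / p) := by gcongr; exact h n k N hn hk
  · have := hb.rpow_const (Or.inr (one_div_pos.mpr hp).le)
    rwa [Real.zero_rpow (one_div_pos.mpr hp).ne'] at this

lemma continuous_of_norm_sub_le_div_rpow {E F : Type*} [SeminormedAddCommGroup E]
    [SeminormedAddCommGroup F] {G : E → F} {C α : ℝ} (hα : 0 < α)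
    (h : ∀ x y, ‖G x - G y‖ ≤ (‖x - y‖ / C) ^ α) : Continuous G := by
  refine continuous_iff_continuousAt.mpr fun x => tendsto_iff_norm_sub_tendsto_zero.mpr ?_
  have hdist : Tendsto (fun y => ‖y - x‖ / C) (𝓝 x) (𝓝 0) :=
    ((continuous_sub_right x).norm.div_const C).tendsto' x 0 (by simp)
  refine squeeze_zero (fun _ => norm_nonneg _) (fun y => h y x) ?_
  simpa [Real.zero_rpow hα.ne'] using hdist.rpow_const (Or.inr hα.le)

lemma LowerSemicontinuousAt.le_of_tendsto_of_le {α β ι : Type*} [TopologicalSpace α]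
    [LinearOrder β] [TopologicalSpace β] [OrderTopology β] [DenselyOrdered β]
    {f : α → β} {x : α} (hf : LowerSemicontinuousAt f x) {l : Filter ι} [l.NeBot]
    {u : ι → α} {w : ι → β} {L : β} (hu : Tendsto u l (𝓝 x)) (hw : Tendsto w l (𝓝 L))
    (hle : ∀ i, f (u i) ≤ w i) : f x ≤ L := by
  by_contra! hlt
  obtain ⟨c, hLc, hcf⟩ := exists_between hlt
  obtain ⟨i, hcu, hwc⟩ :=
    ((hu.eventually (hf c hcf)).and (hw.eventually (gt_mem_nhds hLc))).exists
  exact (hcu.trans_le (hle i)).not_gt hwc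

lemma hasFDerivAt_of_nonneg_of_le_apply_sub {E : Type*} [NormedAddCommGroup E]
    [NormedSpace ℝ E] {φ : E → ℝ} {D : E → StrongDual ℝ E} {ξ : E} (hD : ContinuousAt D ξ)
    (hlow : ∀ η, 0 ≤ φ η - φ ξ - D ξ (η - ξ))
    (hup : ∀ η, φ η - φ ξ - D ξ (η - ξ) ≤ (D η - D ξ) (η - ξ)) :
    HasFDerivAt φ (D ξ) ξ := by
  rw [hasFDerivAt_iff_isLittleO, Asymptotics.isLittleO_iff]
  intro c hc
  filter_upwards [hD.eventually (Metric.closedBall_mem_nhds _ hc)] with η hη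
  rw [dist_eq_norm] at hη
  calc ‖φ η - φ ξ - D ξ (η - ξ)‖ = φ η - φ ξ - D ξ (η - ξ) := Real.norm_of_nonneg (hlow η)
    _ ≤ ‖(D η - D ξ) (η - ξ)‖ := (hup η).trans (Real.le_norm_self _)
    _ ≤ ‖D η - D ξ‖ * ‖η - ξ‖ := (D η - D ξ).le_opNorm _
    _ ≤ c * ‖η - ξ‖ := by gcongr

section Dual

variable {X : Type*} [NormedAddCommGroup X] [NormedSpace ℝ X]

lemma norm_sub_le_of_add_norm_rpow_le {G : StrongDual ℝ X → X} {R : StrongDual ℝ X → ℝ}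
    {p c₀ : ℝ} (hp : 1 < p) (hc₀ : 0 < c₀)
    (hG : ∀ ξ η, R ξ - ξ (G ξ) + c₀ * ‖G η - G ξ‖ ^ p ≤ R η - ξ (G η))
    (ξ₁ ξ₂ : StrongDual ℝ X) :
    ‖G ξ₁ - G ξ₂‖ ≤ (‖ξ₁ - ξ₂‖ / (2 * c₀)) ^ (1 / (p - 1)) := by
  have h₁₂ := hG ξ₁ ξ₂
  have h₂₁ := hG ξ₂ ξ₁
  rw [norm_sub_rev] at h₁₂
  have hpair : (ξ₁ - ξ₂) (G ξ₁ - G ξ₂) ≤ ‖ξ₁ - ξ₂‖ * ‖G ξ₁ - G ξ₂‖ :=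
    (Real.le_norm_self _).trans ((ξ₁ - ξ₂).le_opNorm _)
  simp only [sub_apply, map_sub] at hpair
  exact le_rpow_one_div_sub_one_of_mul_rpow_le (norm_nonneg _) (by positivity) hp
    (norm_nonneg _) (by linarith)

lemma hasFDerivAt_apply_sub {G : StrongDual ℝ X → X} {R : StrongDual ℝ X → ℝ}
    (hG : ∀ ξ η, R ξ - ξ (G ξ) ≤ R η - ξ (G η)) (hcont : Continuous G)
    (ξ : StrongDual ℝ X) :
    HasFDerivAt (fun η => η (G η) - R η) (inclusionInDoubleDual ℝ X (G ξ)) ξ := by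
  refine hasFDerivAt_of_nonneg_of_le_apply_sub (D := fun η => inclusionInDoubleDual ℝ X (G η))
    ((inclusionInDoubleDual ℝ X).continuous.comp hcont).continuousAt (fun η => ?_) (fun η => ?_)
  · have := hG η ξ
    simp only [dual_def, sub_apply]
    linarith
  · have := hG ξ η
    simp only [dual_def, sub_apply, map_sub]
    linarith

def IsPConvex (p c₀ : ℝ) (Θ : X → EReal) : Prop :=
  ∀ x xb : X, ∀ γ : ℝ, 0 ≤ γ → γ ≤ 1 →
    Θ (γ • xb + (1 - γ) • x) + ((c₀ * γ * (1 - γ) * ‖xb - x‖ ^ p : ℝ) : EReal)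
      ≤ (γ : EReal) * Θ xb + ((1 - γ : ℝ) : EReal) * Θ x

namespace IsPConvex

variable {Θ : X → EReal} {p c₀ : ℝ}

lemma exists_coe_add_le (hΘ : IsPConvex p c₀ Θ) (hbot : ∀ z, Θ z ≠ ⊥) {x xb : X} {s r γ : ℝ}
    (hx : Θ x = s) (hxb : Θ xb = r) (h0 : 0 ≤ γ) (h1 : γ ≤ 1) :
    ∃ t : ℝ, Θ (γ • xb + (1 - γ) • x) = t ∧
      t + c₀ * γ * (1 - γ) * ‖xb - x‖ ^ p ≤ γ * r + (1 - γ) * s := by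
  have h := hΘ x xb γ h0 h1
  rw [hxb, hx, ← EReal.coe_mul, ← EReal.coe_mul, ← EReal.coe_add] at h
  have hne : Θ (γ • xb + (1 - γ) • x) ≠ ⊤ := by
    intro htop
    rw [htop, EReal.top_add_coe] at h
    exact EReal.coe_ne_top _ (top_le_iff.mp h)
  refine ⟨_, (EReal.coe_toReal hne (hbot _)).symm, ?_⟩
  rw [← EReal.coe_toReal hne (hbot _), ← EReal.coe_add] at h
  exact_mod_cast h

lemma exists_coe_sub_add_le (hΘ : IsPConvex p c₀ Θ) (hbot : ∀ z, Θ z ≠ ⊥)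
    (ξ : StrongDual ℝ X) {x xb : X} {s r γ : ℝ} (hx : Θ x = s) (hxb : Θ xb = r)
    (h0 : 0 ≤ γ) (h1 : γ ≤ 1) :
    ∃ t : ℝ, Θ (γ • xb + (1 - γ) • x) = t ∧
      t - ξ (γ • xb + (1 - γ) • x) + c₀ * γ * (1 - γ) * ‖xb - x‖ ^ p
        ≤ γ * (r - ξ xb) + (1 - γ) * (s - ξ x) := by
  obtain ⟨t, ht, hle⟩ := hΘ.exists_coe_add_le hbot hx hxb h0 h1
  refine ⟨t, ht, ?_⟩
  simp only [map_add, map_smul, smul_eq_mul]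
  linarith

lemma le_of_lt_on_ball (hΘ : IsPConvex p c₀ Θ) (hbot : ∀ z, Θ z ≠ ⊥) (hc₀ : 0 ≤ c₀)
    {z₀ x : X} {t₀ δ r : ℝ} (hz₀ : Θ z₀ = t₀) (hδ : 0 < δ)
    (hball : ∀ y, ‖y - z₀‖ < δ → ((t₀ - 1 : ℝ) : EReal) < Θ y) (hx : Θ x = r)
    (hR : δ ≤ ‖x - z₀‖) :
    t₀ - 2 / δ * ‖x - z₀‖ + c₀ / 2 * ‖x - z₀‖ ^ p ≤ r := by
  set R := ‖x - z₀‖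
  have hR0 : 0 < R := hδ.trans_le hR
  set γ := δ / (2 * R) with hγdef
  have hγ0 : 0 < γ := by positivity
  have hγ : γ ≤ 1 / 2 := by
    rw [div_le_div_iff₀ (by positivity) (by norm_num)]
    linarith
  have hγR : γ * (2 / δ * R) = 1 := by rw [hγdef]; field_simp
  obtain ⟨t, ht, hle⟩ := hΘ.exists_coe_add_le hbot hz₀ hx hγ0.le (by linarith)
  have hnear : ‖γ • x + (1 - γ) • z₀ - z₀‖ = δ / 2 := by
    rw [show γ • x + (1 - γ) • z₀ - z₀ = γ • (x - z₀) by module, norm_smul,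
      Real.norm_of_nonneg hγ0.le]
    show δ / (2 * R) * R = δ / 2
    field_simp
  have ht₀ : t₀ - 1 < t := by
    have := hball _ (by rw [hnear]; linarith)
    rwa [ht, EReal.coe_lt_coe_iff] at this
  have hRp : c₀ / 2 * R ^ p ≤ c₀ * (1 - γ) * R ^ p := by
    have : 0 ≤ c₀ * R ^ p := by positivity
    nlinarith
  have : γ * (t₀ - 2 / δ * R + c₀ / 2 * R ^ p) ≤ γ * r := by
    nlinarith
  exact le_of_mul_le_mul_left this hγ0

lemma exists_dual_sub_le (hΘ : IsPConvex p c₀ Θ) (hbot : ∀ z, Θ z ≠ ⊥)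
    (hlsc : LowerSemicontinuous Θ) (hproper : ∃ z, Θ z ≠ ⊤) (hp : 2 ≤ p) (hc₀ : 0 < c₀)
    (ξ : StrongDual ℝ X) : ∃ M, ∀ x (r : ℝ), Θ x = r → ξ x - r ≤ M := by
  obtain ⟨z₀, hz₀⟩ := hproper
  set t₀ := (Θ z₀).toReal
  have hz₀ : Θ z₀ = t₀ := (EReal.coe_toReal hz₀ (hbot z₀)).symm
  obtain ⟨δ, hδ, hball⟩ : ∃ δ > 0, ∀ y, ‖y - z₀‖ < δ → ((t₀ - 1 : ℝ) : EReal) < Θ y := by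
    have := hlsc z₀ ((t₀ - 1 : ℝ) : EReal) (by
      change ((t₀ - 1 : ℝ) : EReal) < Θ z₀
      rw [hz₀, EReal.coe_lt_coe_iff]; linarith)
    simpa only [Metric.eventually_nhds_iff, dist_eq_norm] using this
  obtain ⟨K, hK⟩ := exists_mul_sub_mul_rpow_le (‖ξ‖ + 2 / δ) (by positivity : 0 < c₀ / 2) hp
  refine ⟨max (ξ z₀ + ‖ξ‖ * δ - (t₀ - 1)) (ξ z₀ - t₀ + K), fun x r hx => ?_⟩
  have hξx : ξ x ≤ ξ z₀ + ‖ξ‖ * ‖x - z₀‖ := by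
    have := (Real.le_norm_self (ξ (x - z₀))).trans (ξ.le_opNorm _)
    rw [map_sub] at this
    linarith
  rcases lt_or_ge ‖x - z₀‖ δ with hR | hR
  · have hr : t₀ - 1 < r := by
      have := hball x hR
      rwa [hx, EReal.coe_lt_coe_iff] at this
    have : ‖ξ‖ * ‖x - z₀‖ ≤ ‖ξ‖ * δ := by gcongr
    exact le_max_of_le_left (by linarith)
  · have hr := hΘ.le_of_lt_on_ball hbot hc₀.le hz₀ hδ hball hx hR
    have := hK ‖x - z₀‖ (norm_nonneg _)
    exact le_max_of_le_right (by linarith)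

lemma norm_sub_rpow_le_of_forall_le_sub (hΘ : IsPConvex p c₀ Θ) (hbot : ∀ z, Θ z ≠ ⊥)
    (ξ : StrongDual ℝ X) {m : ℝ} (hm : ∀ x (r : ℝ), Θ x = r → m ≤ r - ξ x) {b c : X}
    {rb rc : ℝ} (hb : Θ b = rb) (hc : Θ c = rc) :
    c₀ / 4 * ‖c - b‖ ^ p ≤ (rb - ξ b) / 2 + (rc - ξ c) / 2 - m := by
  obtain ⟨t, ht, hle⟩ :=
    hΘ.exists_coe_sub_add_le hbot ξ hb hc (by norm_num : (0 : ℝ) ≤ 1 / 2) (by norm_num)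
  have := hm _ _ ht
  linarith

lemma exists_forall_sub_le [CompleteSpace X] (hΘ : IsPConvex p c₀ Θ) (hbot : ∀ z, Θ z ≠ ⊥)
    (hlsc : LowerSemicontinuous Θ) (hproper : ∃ z, Θ z ≠ ⊤) (hp : 0 < p) (hc₀ : 0 < c₀)
    (ξ : StrongDual ℝ X) {M : ℝ} (hM : ∀ x (r : ℝ), Θ x = r → ξ x - r ≤ M) :
    ∃ (xb : X) (rb : ℝ), Θ xb = rb ∧ ∀ x (r : ℝ), Θ x = r → rb - ξ xb ≤ r - ξ x := by
  set B : Set ℝ := {t | ∃ (x : X) (r : ℝ), Θ x = r ∧ t = r - ξ x}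
  have hB : B.Nonempty := by
    obtain ⟨z₀, hz₀⟩ := hproper
    exact ⟨_, z₀, _, (EReal.coe_toReal hz₀ (hbot z₀)).symm, rfl⟩
  have hBbdd : BddBelow B := ⟨-M, by rintro _ ⟨x, r, hx, rfl⟩; linarith [hM x r hx]⟩
  set m := sInf B
  have hm : ∀ x (r : ℝ), Θ x = r → m ≤ r - ξ x := fun x r hx => csInf_le hBbdd ⟨x, r, hx, rfl⟩
  have hseq : ∀ n : ℕ, ∃ (x : X) (r : ℝ), Θ x = r ∧ r - ξ x < m + (1 / 2 : ℝ) ^ n := by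
    intro n
    obtain ⟨_, ⟨x, r, hx, rfl⟩, hlt⟩ :=
      Real.lt_sInf_add_pos hB (by positivity : (0 : ℝ) < (1 / 2) ^ n)
    exact ⟨x, r, hx, hlt⟩
  choose u v hu hv using hseq
  have hhalf : Tendsto (fun n : ℕ => (1 / 2 : ℝ) ^ n) atTop (𝓝 0) :=
    tendsto_pow_atTop_nhds_zero_of_lt_one (by norm_num) (by norm_num)
  have hcauchy : CauchySeq u := by
    refine cauchySeq_of_norm_sub_rpow_le hp (b := fun N => 4 / c₀ * (1 / 2 : ℝ) ^ N)
      (by simpa using hhalf.const_mul (4 / c₀)) fun n k N hn hk => ?_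
    have hmid := hΘ.norm_sub_rpow_le_of_forall_le_sub hbot ξ hm (hu k) (hu n)
    have hn' := (pow_le_pow_of_le_one (by norm_num) (by norm_num) hn : (1 / 2 : ℝ) ^ n ≤ _)
    have hk' := (pow_le_pow_of_le_one (by norm_num) (by norm_num) hk : (1 / 2 : ℝ) ^ k ≤ _)
    rw [div_mul_eq_mul_div, le_div_iff₀ hc₀]
    linarith [hv n, hv k]
  obtain ⟨xb, hxb⟩ := cauchySeq_tendsto_of_complete hcauchy
  have hle : Θ xb ≤ ((m + ξ xb : ℝ) : EReal) := by
    refine LowerSemicontinuousAt.le_of_tendsto_of_le (hlsc xb) hxb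
      (w := fun n => ((m + (1 / 2 : ℝ) ^ n + ξ (u n) : ℝ) : EReal)) ?_ fun n => ?_
    · have := (hhalf.const_add m).add ((ξ.continuous.tendsto xb).comp hxb)
      rw [add_zero] at this
      exact (continuous_coe_real_ereal.tendsto _).comp this
    · rw [hu n, EReal.coe_le_coe_iff]
      linarith [hv n]
  have hne : Θ xb ≠ ⊤ := ne_top_of_le_ne_top (EReal.coe_ne_top _) hle
  refine ⟨xb, _, (EReal.coe_toReal hne (hbot xb)).symm, fun x r hx => ?_⟩
  rw [← EReal.coe_toReal hne (hbot xb), EReal.coe_le_coe_iff] at hle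
  linarith [hm x r hx]

lemma add_norm_rpow_le_of_forall_sub_le (hΘ : IsPConvex p c₀ Θ) (hbot : ∀ z, Θ z ≠ ⊥)
    (ξ : StrongDual ℝ X) {xb : X} {rb : ℝ} (hxb : Θ xb = rb)
    (hmin : ∀ x (r : ℝ), Θ x = r → rb - ξ xb ≤ r - ξ x) {x : X} {r : ℝ} (hx : Θ x = r) :
    rb - ξ xb + c₀ * ‖x - xb‖ ^ p ≤ r - ξ x := by
  have hγ : ∀ γ ∈ Set.Ioo (0 : ℝ) 1, rb - ξ xb + c₀ * (1 - γ) * ‖x - xb‖ ^ p ≤ r - ξ x := by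
    rintro γ ⟨hγ0, hγ1⟩
    obtain ⟨t, ht, hle⟩ := hΘ.exists_coe_sub_add_le hbot ξ hxb hx hγ0.le hγ1.le
    have := hmin _ _ ht
    have : γ * (rb - ξ xb + c₀ * (1 - γ) * ‖x - xb‖ ^ p) ≤ γ * (r - ξ x) := by nlinarith
    exact le_of_mul_le_mul_left this hγ0
  have hlim : Tendsto (fun γ : ℝ => rb - ξ xb + c₀ * (1 - γ) * ‖x - xb‖ ^ p) (𝓝[>] 0)
      (𝓝 (rb - ξ xb + c₀ * ‖x - xb‖ ^ p)) :=
    ((Continuous.tendsto' (by fun_prop) 0 _ (by simp)).mono_left nhdsWithin_le_nhds)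
  exact le_of_tendsto hlim (eventually_of_mem (Ioo_mem_nhdsGT one_pos) hγ)

end IsPConvex

lemma fenchelConj_eq_of_forall_sub_le {Θ : X → EReal} (hbot : ∀ z, Θ z ≠ ⊥)
    {ξ : StrongDual ℝ X} {xb : X} {rb : ℝ} (hxb : Θ xb = rb)
    (hmin : ∀ x (r : ℝ), Θ x = r → rb - ξ xb ≤ r - ξ x) :
    fenchelConj Θ ξ = ((ξ xb - rb : ℝ) : EReal) := by
  refine le_antisymm (iSup_le fun z => ?_) ?_
  · rcases eq_or_ne (Θ z) ⊤ with hz | hz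
    · simp [hz]
    · rw [← EReal.coe_toReal hz (hbot z), ← EReal.coe_sub, EReal.coe_le_coe_iff]
      linarith [hmin z _ (EReal.coe_toReal hz (hbot z)).symm]
  · have := le_iSup (fun z => ((ξ z : ℝ) : EReal) - Θ z) xb
    rwa [hxb, ← EReal.coe_sub] at this

end Dual

theorem conj_full_domain_diff_grad_holder_general {X : Type*} [NormedAddCommGroup X]
    [NormedSpace ℝ X] [CompleteSpace X]
    (Θ : X → EReal) (p c₀ : ℝ) (hp : 2 ≤ p) (hc₀ : 0 < c₀)
    (hproper : ∃ z, Θ z ≠ ⊤) (hbot : ∀ z, Θ z ≠ ⊥)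
    (hlsc : LowerSemicontinuous Θ)
    (hpconv : ∀ x xb : X, ∀ γ : ℝ, 0 ≤ γ → γ ≤ 1 →
      Θ (γ • xb + (1 - γ) • x) + ((c₀ * γ * (1 - γ) * ‖xb - x‖ ^ p : ℝ) : EReal)
        ≤ (γ : EReal) * Θ xb + ((1 - γ : ℝ) : EReal) * Θ x) :
    (∀ ξ : StrongDual ℝ X, fenchelConj Θ ξ ≠ ⊤ ∧ fenchelConj Θ ξ ≠ ⊥) ∧
    ∃ G : StrongDual ℝ X → X,
      (∀ ξ : StrongDual ℝ X,
        HasFDerivAt (fun η : StrongDual ℝ X => (fenchelConj Θ η).toReal)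
          (inclusionInDoubleDual ℝ X (G ξ)) ξ) ∧
      (∀ ξ₁ ξ₂ : StrongDual ℝ X,
        ‖G ξ₁ - G ξ₂‖ ≤ (‖ξ₁ - ξ₂‖ / (2 * c₀)) ^ (1 / (p - 1))) := by
  have hΘ : IsPConvex p c₀ Θ := hpconv
  have hmin (ξ : StrongDual ℝ X) : ∃ (xb : X) (rb : ℝ),
      Θ xb = rb ∧ ∀ x (r : ℝ), Θ x = r → rb - ξ xb ≤ r - ξ x :=
    have ⟨_, hM⟩ := hΘ.exists_dual_sub_le hbot hlsc hproper hp hc₀ ξ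
    hΘ.exists_forall_sub_le hbot hlsc hproper (by linarith) hc₀ ξ hM
  choose G R hGR hGmin using hmin
  have hconj (ξ) : fenchelConj Θ ξ = ((ξ (G ξ) - R ξ : ℝ) : EReal) :=
    fenchelConj_eq_of_forall_sub_le hbot (hGR ξ) (hGmin ξ)
  have hholder := norm_sub_le_of_add_norm_rpow_le (by linarith) hc₀
    fun ξ η => hΘ.add_norm_rpow_le_of_forall_sub_le hbot ξ (hGR ξ) (hGmin ξ) (hGR η)
  refine ⟨fun ξ => hconj ξ ▸ ⟨EReal.coe_ne_top _, EReal.coe_ne_bot _⟩, G, fun ξ => ?_, hholder⟩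
  simp only [hconj, EReal.toReal_coe]
  exact hasFDerivAt_apply_sub (fun ξ η => hGmin ξ _ _ (hGR η))
    (continuous_of_norm_sub_le_div_rpow (one_div_pos.mpr (by linarith)) hholder) ξ

/-- Let `Θ` be proper, lower semi-continuous and `p`-convex (`p ≥ 2`, constant `c₀ > 0`)
on a reflexive Banach space `X`. Then the conjugate `Θ*` has full domain `X*`, is Fréchet
differentiable, and its gradient `∇Θ* : X* → X` satisfies
`‖∇Θ*(ξ₁) - ∇Θ*(ξ₂)‖ ≤ (‖ξ₁ - ξ₂‖/(2c₀))^(1/(p-1))` for all `ξ₁, ξ₂ ∈ X*`. -/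
theorem conj_full_domain_diff_grad_holder {X : Type*} [NormedAddCommGroup X]
    [NormedSpace ℝ X] [CompleteSpace X]
    (hrefl : Function.Surjective (inclusionInDoubleDual ℝ X))
    (Θ : X → EReal) (p c₀ : ℝ) (hp : 2 ≤ p) (hc₀ : 0 < c₀)
    (hproper : ∃ z, Θ z ≠ ⊤) (hbot : ∀ z, Θ z ≠ ⊥)
    (hlsc : LowerSemicontinuous Θ)
    (hpconv : ∀ x xb : X, ∀ γ : ℝ, 0 ≤ γ → γ ≤ 1 →
      Θ (γ • xb + (1 - γ) • x) + ((c₀ * γ * (1 - γ) * ‖xb - x‖ ^ p : ℝ) : EReal)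
        ≤ (γ : EReal) * Θ xb + ((1 - γ : ℝ) : EReal) * Θ x) :
    (∀ ξ : StrongDual ℝ X, fenchelConj Θ ξ ≠ ⊤ ∧ fenchelConj Θ ξ ≠ ⊥) ∧
    ∃ G : StrongDual ℝ X → X,
      (∀ ξ : StrongDual ℝ X,
        HasFDerivAt (fun η : StrongDual ℝ X => (fenchelConj Θ η).toReal)
          (inclusionInDoubleDual ℝ X (G ξ)) ξ) ∧
      (∀ ξ₁ ξ₂ : StrongDual ℝ X,
        ‖G ξ₁ - G ξ₂‖ ≤ (‖ξ₁ - ξ₂‖ / (2 * c₀)) ^ (1 / (p - 1))) :=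
  conj_full_domain_diff_grad_holder_general Θ p c₀ hp hc₀ hproper hbot hlsc hpconv
end

section
/- Let X be a Banach space, Θ proper, lower semi-continuous and p-convex with constant c₀ > 0, and let (xₙ) ⊂ X, (ξₙ) ⊂ X* with ξₙ ∈ ∂Θ(xₙ). Suppose there are a point x̂ and a constant C > 0 such that Dₙ := D_{ξₙ}Θ(x̂, xₙ) is non-increasing and for all l < k the estimate D_{ξ_{n_l}}Θ(x_{n_k}, x_{n_l}) ≤ (1 + C)(D_{n_l} − D_{n_k}) holds along a subsequence (n_k). Then (x_{n_k}) is a Cauchy sequence in X. -/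
/-!
Applied at `x_{n_l}` and `z = x_{n_k}`, `p`-convexity bounds `c₀ ‖x_{n_k} - x_{n_l}‖ ^ p` by the
Bregman distance, hence by `(1 + C) (D_{n_l} - D_{n_k})`. Applied at `z = x̂` it shows `D ≥ 0`,
so the non-increasing sequence `D` converges and these differences tend to `0`.
-/

theorem EReal.sub_ne_top_of_ne_bot {a b : EReal} (ha : a ≠ ⊤) (hb : b ≠ ⊥) : a - b ≠ ⊤ :=
  EReal.add_ne_top ha (by rwa [ne_eq, EReal.neg_eq_top_iff])

theorem EReal.coe_toReal_of_antitone_of_nonneg {D : ℕ → EReal} (hD : Antitone D)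
    (hD₀ : D 0 ≠ ⊤) (hnonneg : ∀ n, 0 ≤ D n) (n : ℕ) : ((D n).toReal : EReal) = D n :=
  EReal.coe_toReal (ne_top_of_le_ne_top hD₀ (hD n.zero_le))
    (ne_bot_of_le_ne_bot EReal.zero_ne_bot (hnonneg n))

theorem mul_rpow_dist_le_abs_mul_dist {α : Type*} [PseudoMetricSpace α] {u : ℕ → α}
    {d : ℕ → ℝ} {c K p : ℝ} (hp : 0 < p)
    (h : ∀ l k, l < k → c * dist (u k) (u l) ^ p ≤ K * (d l - d k)) (m n : ℕ) :
    c * dist (u m) (u n) ^ p ≤ |K| * dist (d m) (d n) := by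
  have hK : ∀ t : ℝ, K * t ≤ |K| * |t| := fun t => (le_abs_self _).trans (abs_mul K t).le
  rcases lt_trichotomy m n with hmn | rfl | hmn
  · rw [dist_comm (u m), Real.dist_eq]; exact (h m n hmn).trans (hK _)
  · simp [Real.zero_rpow hp.ne']
  · rw [Real.dist_eq, abs_sub_comm]; exact (h n m hmn).trans (hK _)

theorem cauchySeq_of_mul_rpow_dist_le {α : Type*} [PseudoMetricSpace α] {u : ℕ → α}
    {d : ℕ → ℝ} {c K p : ℝ} (hc : 0 < c) (hp : 0 < p) (hd : CauchySeq d)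
    (h : ∀ l k, l < k → c * dist (u k) (u l) ^ p ≤ K * (d l - d k)) :
    CauchySeq u := by
  rw [cauchySeq_iff_tendsto_dist_atTop_0] at hd ⊢
  have hbound : ∀ mn : ℕ × ℕ,
      dist (u mn.1) (u mn.2) ≤ (|K| / c * dist (d mn.1) (d mn.2)) ^ p⁻¹ := by
    intro mn
    rw [← Real.rpow_le_rpow_iff dist_nonneg (by positivity) hp,
      ← Real.rpow_mul (by positivity), inv_mul_cancel₀ hp.ne', Real.rpow_one,
      div_mul_eq_mul_div, le_div_iff₀' hc]
    exact mul_rpow_dist_le_abs_mul_dist hp h _ _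
  have hlim := (hd.const_mul (|K| / c)).rpow_const (.inr (inv_nonneg.2 hp.le))
  rw [mul_zero, Real.zero_rpow (inv_ne_zero hp.ne')] at hlim
  exact squeeze_zero (fun _ => dist_nonneg) hbound hlim

theorem bregman_cauchy_subsequence_general {X : Type*} [NormedAddCommGroup X] [NormedSpace ℝ X]
    (Θ : X → EReal) (p c₀ : ℝ) (hp : 2 ≤ p) (hc₀ : 0 < c₀)
    (hbot : ∀ z, Θ z ≠ ⊥)
    (x : ℕ → X) (ξ : ℕ → StrongDual ℝ X)
    (hpc : ∀ n, ∀ z : X, ((c₀ * ‖z - x n‖ ^ p : ℝ) : EReal)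
      ≤ Θ z - Θ (x n) - ((ξ n (z - x n) : ℝ) : EReal))
    (xhat : X) (hxhat : Θ xhat ≠ ⊤)
    (C : ℝ)
    (D : ℕ → EReal)
    (hD : ∀ n, D n = Θ xhat - Θ (x n) - ((ξ n (xhat - x n) : ℝ) : EReal))
    (hmono : Antitone D)
    (nk : ℕ → ℕ) (hnk : StrictMono nk)
    (hest : ∀ l k : ℕ, l < k →
      Θ (x (nk k)) - Θ (x (nk l)) - ((ξ (nk l) (x (nk k) - x (nk l)) : ℝ) : EReal)
        ≤ ((1 + C : ℝ) : EReal) * (D (nk l) - D (nk k))) :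
    CauchySeq (fun k => x (nk k)) := by
  have hD_nonneg : ∀ n, 0 ≤ D n := fun n => by
    rw [hD n]; exact (EReal.coe_nonneg.2 (by positivity)).trans (hpc n xhat)
  have hD₀ : D 0 ≠ ⊤ := by
    rw [hD 0]
    exact EReal.sub_ne_top_of_ne_bot (EReal.sub_ne_top_of_ne_bot hxhat (hbot _))
      (EReal.coe_ne_bot _)
  set d : ℕ → ℝ := fun k => (D (nk k)).toReal
  have hcoe : ∀ k, (d k : EReal) = D (nk k) := fun k =>
    EReal.coe_toReal_of_antitone_of_nonneg hmono hD₀ hD_nonneg (nk k)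
  have hd_anti : Antitone d := fun l k hlk =>
    EReal.coe_le_coe_iff.1 <| by simpa only [hcoe] using hmono (hnk.monotone hlk)
  have hd : CauchySeq d :=
    (tendsto_atTop_ciInf hd_anti ⟨0, by
      rintro _ ⟨k, rfl⟩; exact EReal.toReal_nonneg (hD_nonneg _)⟩).cauchySeq
  refine cauchySeq_of_mul_rpow_dist_le (K := 1 + C) (p := p) hc₀ (by linarith) hd fun l k hlk => ?_
  rw [dist_eq_norm, ← EReal.coe_le_coe_iff, EReal.coe_mul (1 + C), EReal.coe_sub, hcoe, hcoe]
  exact (hpc (nk l) (x (nk k))).trans (hest l k hlk)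

/-- Let `X` be a Banach space, `Θ` proper, lower semi-continuous and `p`-convex with
constant `c₀ > 0`, and `(xₙ) ⊂ X`, `(ξₙ) ⊂ X*` with `ξₙ ∈ ∂Θ(xₙ)`. If there are a
point `x̂` and a constant `C > 0` such that `Dₙ := D_{ξₙ}Θ(x̂, xₙ)` is non-increasing,
and along a subsequence `(n_k)` the estimate
`D_{ξ_{n_l}}Θ(x_{n_k}, x_{n_l}) ≤ (1 + C)(D_{n_l} - D_{n_k})` holds for all `l < k`,
then `(x_{n_k})` is a Cauchy sequence in `X`. -/
theorem bregman_cauchy_subsequence {X : Type*} [NormedAddCommGroup X] [NormedSpace ℝ X]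
    [CompleteSpace X]
    (Θ : X → EReal) (p c₀ : ℝ) (hp : 2 ≤ p) (hc₀ : 0 < c₀)
    (hproper : ∃ z, Θ z ≠ ⊤) (hbot : ∀ z, Θ z ≠ ⊥)
    (hlsc : LowerSemicontinuous Θ)
    (x : ℕ → X) (ξ : ℕ → StrongDual ℝ X)
    (hsub : ∀ n, ∀ z : X, Θ (x n) + ((ξ n (z - x n) : ℝ) : EReal) ≤ Θ z)
    (hpc : ∀ n, ∀ z : X, ((c₀ * ‖z - x n‖ ^ p : ℝ) : EReal)
      ≤ Θ z - Θ (x n) - ((ξ n (z - x n) : ℝ) : EReal))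
    (xhat : X) (hxhat : Θ xhat ≠ ⊤) (hxn : ∀ n, Θ (x n) ≠ ⊤)
    (C : ℝ) (hC : 0 < C)
    (D : ℕ → EReal)
    (hD : ∀ n, D n = Θ xhat - Θ (x n) - ((ξ n (xhat - x n) : ℝ) : EReal))
    (hmono : Antitone D)
    (nk : ℕ → ℕ) (hnk : StrictMono nk)
    (hest : ∀ l k : ℕ, l < k →
      Θ (x (nk k)) - Θ (x (nk l)) - ((ξ (nk l) (x (nk k) - x (nk l)) : ℝ) : EReal)
        ≤ ((1 + C : ℝ) : EReal) * (D (nk l) - D (nk k))) :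
    CauchySeq (fun k => x (nk k)) :=
  bregman_cauchy_subsequence_general Θ p c₀ hp hc₀ hbot x ξ hpc xhat hxhat C D hD hmono nk hnk hest
end
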